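/- arXiv:0902.2116 — 7 statements merged into one kernel-verified Lean document; each statement's English description precedes it below -/
import Mathlib

section
/- Let B be a ring, Σ a finitely generated projective right B-module with endomorphism ring T = End_B(Σ) and right dual Σ* = Hom_B(Σ, B). If I is a maximal right ideal of B such that IΣ* is a proper right T-submodule of Σ*, then IΣ* is a maximal right T-submodule of Σ*. -/
/-!
By the dual basis lemma, `IΣ*` consists exactly of the `f ∈ Σ*` with `f(Σ) ⊆ I`. Maximality of
this submodule comes from maximality of `I`: if `f(v₀) ∉ I`, write `1 = y + f(v₀) b` with `y ∈ I`;
then every `σ ∈ Σ*` splits as `y σ + f ∘ t`, where `t` is the rank-one endomorphism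
`w ↦ v₀ · b σ(w)`, and `y σ` takes values in `I`.
-/

open MulOpposite

/-- For a ring `B`, a right `B`-module `V` (encoded as a left `Bᵐᵒᵖ`-module) and a
right `B`-module `N`, the group `Hom_B(V, N)` is a right module over the
endomorphism ring `T = End_B(V)` by precomposition. -/
instance dualEndModule {B V N : Type*} [Ring B] [AddCommGroup V] [Module Bᵐᵒᵖ V]
    [AddCommGroup N] [Module Bᵐᵒᵖ N] :
    Module (Module.End Bᵐᵒᵖ V)ᵐᵒᵖ (V →ₗ[Bᵐᵒᵖ] N) where
  smul t σ := σ ∘ₗ t.unop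
  one_smul σ := rfl
  mul_smul t s σ := rfl
  smul_zero t := rfl
  smul_add t σ τ := rfl
  add_smul t s σ := LinearMap.ext fun v => by
    show σ ((t.unop + s.unop) v) = σ (t.unop v) + σ (s.unop v)
    simp
  zero_smul σ := LinearMap.ext fun v => by
    show σ ((0 : Module.End Bᵐᵒᵖ V) v) = 0
    simp

namespace Module.Finite

theorem exists_dualBasis_of_projective (R M : Type*) [Semiring R] [AddCommMonoid M] [Module R M]
    [Module.Finite R M] [Module.Projective R M] :
    ∃ (n : ℕ) (u : Fin n → M) (φ : Fin n → M →ₗ[R] R), ∀ m, ∑ k, φ k m • u k = m := by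
  obtain ⟨n, f, g, -, -, hfg⟩ := exists_comp_eq_id_of_projective R M
  refine ⟨n, fun k => f (Pi.single k 1), fun k => LinearMap.proj k ∘ₗ g, fun m => ?_⟩
  calc ∑ k, g m k • f (Pi.single k 1) = f (g m) := by
        conv_rhs => rw [pi_eq_sum_univ' (g m), map_sum]
        simp only [map_smul]
    _ = m := LinearMap.congr_fun hfg m

end Module.Finite

section HomsInto

variable {B : Type*} [Ring B] (V : Type*) [AddCommGroup V] [Module Bᵐᵒᵖ V]

def homsInto (I : Submodule Bᵐᵒᵖ B) :
    Submodule (Module.End Bᵐᵒᵖ V)ᵐᵒᵖ (V →ₗ[Bᵐᵒᵖ] B) where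
  carrier := {f | ∀ v, f v ∈ I}
  add_mem' hf hg v := I.add_mem (hf v) (hg v)
  zero_mem' _ := I.zero_mem
  smul_mem' t _ hf v := hf (t.unop v)

variable {V} {I : Submodule Bᵐᵒᵖ B}

@[simp]
theorem mem_homsInto {f : V →ₗ[Bᵐᵒᵖ] B} : f ∈ homsInto V I ↔ ∀ v, f v ∈ I := Iff.rfl

theorem smul_mem_homsInto {y : B} (hy : y ∈ I) (σ : V →ₗ[Bᵐᵒᵖ] B) : y • σ ∈ homsInto V I :=
  fun v => I.smul_mem (op (σ v)) hy

theorem exists_add_mul_eq_one_of_isCoatom (hI : IsCoatom I) {x : B} (hx : x ∉ I) :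
    ∃ y ∈ I, ∃ b : B, y + x * b = 1 := by
  have hsup : I ⊔ Submodule.span Bᵐᵒᵖ {x} = ⊤ :=
    hI.2 _ (left_lt_sup.mpr fun h => hx (h (Submodule.mem_span_singleton_self x)))
  obtain ⟨y, hy, z, hz, hyz⟩ := Submodule.mem_sup.mp (hsup ▸ Submodule.mem_top : (1 : B) ∈ _)
  obtain ⟨c, rfl⟩ := Submodule.mem_span_singleton.mp hz
  exact ⟨y, hy, c.unop, hyz⟩

theorem homsInto_sup_span_eq_top (hI : IsCoatom I) {f : V →ₗ[Bᵐᵒᵖ] B} {v₀ : V} (hv₀ : f v₀ ∉ I) :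
    homsInto V I ⊔ Submodule.span (Module.End Bᵐᵒᵖ V)ᵐᵒᵖ {f} = ⊤ := by
  obtain ⟨y, hy, b, hyb⟩ := exists_add_mul_eq_one_of_isCoatom hI hv₀
  refine eq_top_iff.mpr fun σ _ => ?_
  let t : Module.End Bᵐᵒᵖ V :=
    LinearMap.smulRight ((opLinearEquiv Bᵐᵒᵖ).toLinearMap ∘ₗ (b • σ)) v₀
  have hsplit : y • σ + op t • f = σ := LinearMap.ext fun w => by
    change y * σ w + f (op (b * σ w) • v₀) = σ w
    rw [map_smul, op_smul_eq_mul, ← mul_assoc, ← add_mul, hyb, one_mul]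
  rw [← hsplit]
  exact Submodule.add_mem_sup (smul_mem_homsInto hy σ)
    (Submodule.smul_mem _ _ (Submodule.mem_span_singleton_self f))

theorem isCoatom_homsInto (hI : IsCoatom I) (hne : homsInto V I ≠ ⊤) : IsCoatom (homsInto V I) := by
  refine ⟨hne, fun M hM => ?_⟩
  obtain ⟨f, hfM, hf⟩ := SetLike.exists_of_lt hM
  rw [mem_homsInto, not_forall] at hf
  obtain ⟨v₀, hv₀⟩ := hf
  refine eq_top_iff.mpr ((homsInto_sup_span_eq_top hI hv₀).symm.le.trans ?_)
  exact sup_le hM.le ((Submodule.span_singleton_le_iff_mem f M).mpr hfM)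

theorem coe_homsInto_eq_setOf_sum [Module.Finite Bᵐᵒᵖ V] [Module.Projective Bᵐᵒᵖ V] :
    (homsInto V I : Set (V →ₗ[Bᵐᵒᵖ] B)) =
      {f | ∃ (n : ℕ) (i : Fin n → B) (σ : Fin n → (V →ₗ[Bᵐᵒᵖ] B)),
        (∀ k, i k ∈ I) ∧ ∀ v : V, f v = ∑ k, i k * σ k v} := by
  ext f
  constructor
  · intro hf
    obtain ⟨n, u, φ, hφ⟩ := Module.Finite.exists_dualBasis_of_projective Bᵐᵒᵖ V
    refine ⟨n, fun k => f (u k), fun k => (opLinearEquiv Bᵐᵒᵖ).symm.toLinearMap ∘ₗ φ k,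
      fun k => hf (u k), fun v => ?_⟩
    conv_lhs => rw [← hφ v]
    simp only [map_sum, map_smul]
    rfl
  · rintro ⟨n, i, σ, hi, hsum⟩ v
    rw [hsum v]
    exact I.sum_mem fun k _ => I.smul_mem (op (σ k v)) (hi k)

end HomsInto

/-- Let `B` be a ring, `V` a finitely generated projective right `B`-module with
endomorphism ring `T = End_B(V)` and right dual `V* = Hom_B(V, B)`.  If `I` is a
maximal right ideal of `B` such that `IV*` is a proper right `T`-submodule of
`V*`, then `IV*` is a maximal right `T`-submodule of `V*`.  (Here `IV*` is the
`T`-submodule of `V*` consisting of all finite sums of elements `i·σ`,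
`i ∈ I`, `σ ∈ V*`, where `(i·σ)(v) = i·σ(v)`.) -/
theorem stmt0 {B V : Type*} [Ring B] [AddCommGroup V] [Module Bᵐᵒᵖ V]
    [Module.Finite Bᵐᵒᵖ V] [Module.Projective Bᵐᵒᵖ V]
    (I : Submodule Bᵐᵒᵖ B) (hI : IsCoatom I)
    (N : Submodule (Module.End Bᵐᵒᵖ V)ᵐᵒᵖ (V →ₗ[Bᵐᵒᵖ] B))
    (hN : (N : Set (V →ₗ[Bᵐᵒᵖ] B)) =
      {f | ∃ (n : ℕ) (i : Fin n → B) (σ : Fin n → (V →ₗ[Bᵐᵒᵖ] B)),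
        (∀ k, i k ∈ I) ∧ ∀ v : V, f v = ∑ k, i k * σ k v})
    (hproper : N ≠ ⊤) :
    IsCoatom N := by
  obtain rfl : N = homsInto V I := SetLike.coe_injective (hN.trans coe_homsInto_eq_setOf_sum.symm)
  exact isCoatom_homsInto hI hproper
end

section
/- Let B be a ring, Σ a finitely generated projective right B-module with endomorphism ring T, dual Σ*, and let I be a maximal right ideal of B. If Hom_B(Σ, B/I) ≠ 0, then the right T-module (B/I) ⊗_B Σ* ≅ Σ*/IΣ* is a simple right T-module. -/
/-!
Write `S = B/I`, a simple right `B`-module. Postcomposition with `B → S` maps `Σ*` onto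
`Hom_B(Σ, S)` because `Σ` is projective, and its kernel, the maps landing in `I`, is `IΣ*`
thanks to a finite dual basis of `Σ`; so `Σ*/IΣ* ≅ Hom_B(Σ, S)` as right `T`-modules. The latter
is simple once nonzero: a nonzero `f : Σ → S` is onto, so by projectivity every `g : Σ → S`
factors as `f ∘ t` with `t ∈ T`, i.e. `f` generates.
-/

open MulOpposite

section

variable {B V : Type*} [Ring B] [AddCommGroup V] [Module Bᵐᵒᵖ V]

theorem exists_dual_basis [Module.Finite Bᵐᵒᵖ V] [Module.Projective Bᵐᵒᵖ V] :
    ∃ (n : ℕ) (x : Fin n → V) (σ : Fin n → V →ₗ[Bᵐᵒᵖ] B), ∀ v, ∑ j, op (σ j v) • x j = v := by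
  obtain ⟨n, f, g, -, -, hfg⟩ := Module.Finite.exists_comp_eq_id_of_projective Bᵐᵒᵖ V
  let σ : Fin n → V →ₗ[Bᵐᵒᵖ] B := fun j =>
    { toFun := fun v => unop (g v j)
      map_add' := fun v w => by simp
      map_smul' := fun a v => by simp }
  refine ⟨n, fun j => f (Pi.single j 1), σ, fun v => ?_⟩
  calc ∑ j, op (σ j v) • f (Pi.single j 1) = f (∑ j, g v j • Pi.single j 1) := by
        simp [σ, map_sum]
    _ = v := by rw [← pi_eq_sum_univ', ← LinearMap.comp_apply, hfg, LinearMap.id_apply]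

theorem exists_sum_mul_iff_forall_apply_mem [Module.Finite Bᵐᵒᵖ V] [Module.Projective Bᵐᵒᵖ V]
    (I : Submodule Bᵐᵒᵖ B) (f : V →ₗ[Bᵐᵒᵖ] B) :
    (∃ (n : ℕ) (i : Fin n → B) (σ : Fin n → (V →ₗ[Bᵐᵒᵖ] B)),
      (∀ k, i k ∈ I) ∧ ∀ v : V, f v = ∑ k, i k * σ k v) ↔ ∀ v, f v ∈ I := by
  constructor
  · rintro ⟨n, i, σ, hi, hf⟩ v
    rw [hf v]
    exact I.sum_mem fun k _ => I.smul_mem (op (σ k v)) (hi k)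
  · intro hf
    obtain ⟨n, x, σ, hσ⟩ := exists_dual_basis (B := B) (V := V)
    refine ⟨n, fun j => f (x j), σ, fun j => hf (x j), fun v => ?_⟩
    conv_lhs => rw [← hσ v]
    simp [map_sum]

variable {M P : Type*} [AddCommGroup M] [Module Bᵐᵒᵖ M] [AddCommGroup P] [Module Bᵐᵒᵖ P]

@[simps]
def postcomp (g : M →ₗ[Bᵐᵒᵖ] P) :
    (V →ₗ[Bᵐᵒᵖ] M) →ₗ[(Module.End Bᵐᵒᵖ V)ᵐᵒᵖ] (V →ₗ[Bᵐᵒᵖ] P) where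
  toFun f := g ∘ₗ f
  map_add' f f' := LinearMap.comp_add f f' g
  map_smul' _ _ := rfl

theorem postcomp_surjective [Module.Projective Bᵐᵒᵖ V] {g : M →ₗ[Bᵐᵒᵖ] P}
    (hg : Function.Surjective g) : Function.Surjective (postcomp (V := V) g) :=
  fun h => Module.projective_lifting_property g h hg

theorem mem_ker_postcomp_mkQ (I : Submodule Bᵐᵒᵖ M) (f : V →ₗ[Bᵐᵒᵖ] M) :
    f ∈ LinearMap.ker (postcomp I.mkQ) ↔ ∀ v, f v ∈ I := by
  simp [LinearMap.ext_iff, Submodule.Quotient.mk_eq_zero]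

theorem isSimpleModule_linearMap_of_projective [Module.Projective Bᵐᵒᵖ V] [IsSimpleModule Bᵐᵒᵖ M]
    [Nontrivial (V →ₗ[Bᵐᵒᵖ] M)] : IsSimpleModule (Module.End Bᵐᵒᵖ V)ᵐᵒᵖ (V →ₗ[Bᵐᵒᵖ] M) := by
  refine isSimpleModule_iff_toSpanSingleton_surjective.2 ⟨inferInstance, fun f hf g => ?_⟩
  have hf_surj : Function.Surjective f := by
    rw [← LinearMap.range_eq_top]
    exact (IsSimpleOrder.eq_bot_or_eq_top _).resolve_left (LinearMap.range_eq_bot.not.2 hf)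
  obtain ⟨t, rfl⟩ := Module.projective_lifting_property f g hf_surj
  exact ⟨op t, rfl⟩

end

/-- Let `B` be a ring, `V` a finitely generated projective right `B`-module with
endomorphism ring `T = End_B(V)`, dual `V* = Hom_B(V,B)`, and let `I` be a
maximal right ideal of `B`.  If `Hom_B(V, B/I) ≠ 0`, then the right `T`-module
`(B/I) ⊗_B V* ≅ V*/IV*` is a simple right `T`-module. -/
theorem stmt1 {B V : Type*} [Ring B] [AddCommGroup V] [Module Bᵐᵒᵖ V]
    [Module.Finite Bᵐᵒᵖ V] [Module.Projective Bᵐᵒᵖ V]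
    (I : Submodule Bᵐᵒᵖ B) (hI : IsCoatom I)
    (N : Submodule (Module.End Bᵐᵒᵖ V)ᵐᵒᵖ (V →ₗ[Bᵐᵒᵖ] B))
    (hN : (N : Set (V →ₗ[Bᵐᵒᵖ] B)) =
      {f | ∃ (n : ℕ) (i : Fin n → B) (σ : Fin n → (V →ₗ[Bᵐᵒᵖ] B)),
        (∀ k, i k ∈ I) ∧ ∀ v : V, f v = ∑ k, i k * σ k v})
    (hhom : ∃ f : V →ₗ[Bᵐᵒᵖ] (B ⧸ I), f ≠ 0) :
    IsSimpleModule (Module.End Bᵐᵒᵖ V)ᵐᵒᵖ ((V →ₗ[Bᵐᵒᵖ] B) ⧸ N) := by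
  have hN_ker : N = LinearMap.ker (postcomp I.mkQ) := SetLike.ext fun f => by
    rw [← SetLike.mem_coe, hN, mem_ker_postcomp_mkQ]
    exact exists_sum_mul_iff_forall_apply_mem I f
  have : IsSimpleModule Bᵐᵒᵖ (B ⧸ I) := isSimpleModule_iff_isCoatom.2 hI
  obtain ⟨f, hf⟩ := hhom
  have : Nontrivial (V →ₗ[Bᵐᵒᵖ] (B ⧸ I)) := nontrivial_of_ne f 0 hf
  have := isSimpleModule_linearMap_of_projective (B := B) (V := V) (M := B ⧸ I)
  subst hN_ker
  exact .congr (LinearMap.quotKerEquivOfSurjective _ (postcomp_surjective I.mkQ_surjective))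
end

section
/- Let B be a ring, Σ a finitely generated projective right B-module, and S a simple right B-module with Hom_B(Σ, S) ≠ 0. Then Hom_B(Σ, S) is a simple right module over the endomorphism ring T = End_B(Σ). -/
open MulOpposite

theorem toSpanSingleton_surjective_of_surjective {B V N : Type*} [Ring B] [AddCommGroup V]
    [Module Bᵐᵒᵖ V] [Module.Projective Bᵐᵒᵖ V] [AddCommGroup N] [Module Bᵐᵒᵖ N]
    {f : V →ₗ[Bᵐᵒᵖ] N} (hf : Function.Surjective f) :
    Function.Surjective (LinearMap.toSpanSingleton (Module.End Bᵐᵒᵖ V)ᵐᵒᵖ _ f) := fun g =>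
  let ⟨t, ht⟩ := Module.projective_lifting_property f g hf
  ⟨op t, ht⟩

theorem stmt2_general {B V S : Type*} [Ring B] [AddCommGroup V] [Module Bᵐᵒᵖ V]
    [Module.Projective Bᵐᵒᵖ V]
    [AddCommGroup S] [Module Bᵐᵒᵖ S] [IsSimpleModule Bᵐᵒᵖ S]
    (hhom : ∃ f : V →ₗ[Bᵐᵒᵖ] S, f ≠ 0) :
    IsSimpleModule (Module.End Bᵐᵒᵖ V)ᵐᵒᵖ (V →ₗ[Bᵐᵒᵖ] S) := by
  obtain ⟨f, hf⟩ := hhom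
  have : Nontrivial (V →ₗ[Bᵐᵒᵖ] S) := ⟨f, 0, hf⟩
  exact isSimpleModule_iff_toSpanSingleton_surjective.mpr ⟨this, fun g hg =>
    toSpanSingleton_surjective_of_surjective (g.surjective_of_ne_zero hg)⟩

/-- Let `B` be a ring, `V` a finitely generated projective right `B`-module, and
`S` a simple right `B`-module with `Hom_B(V, S) ≠ 0`.  Then `Hom_B(V, S)` is a
simple right module over the endomorphism ring `T = End_B(V)` (acting by
precomposition). -/
theorem stmt2 {B V S : Type*} [Ring B] [AddCommGroup V] [Module Bᵐᵒᵖ V]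
    [Module.Finite Bᵐᵒᵖ V] [Module.Projective Bᵐᵒᵖ V]
    [AddCommGroup S] [Module Bᵐᵒᵖ S] [IsSimpleModule Bᵐᵒᵖ S]
    (hhom : ∃ f : V →ₗ[Bᵐᵒᵖ] S, f ≠ 0) :
    IsSimpleModule (Module.End Bᵐᵒᵖ V)ᵐᵒᵖ (V →ₗ[Bᵐᵒᵖ] S) :=
  stmt2_general hhom
end

section
/- Let G be a group, A a G-graded ring, 𝒞 = AG, and B = Ã ⊕ (⊕_x e_x Ã) the smash product ring. The A-balanced bilinear form ⟨-,-⟩ : 𝒞 × B → A determined by ⟨x, e_y⟩ = δ_{x,y} and ⟨x, ã⟩ = a satisfies c = Σ_{z∈G} ⟨c, e_z⟩ z (finite sum) for every c ∈ 𝒞, and the induced map α_M : M ⊗_A 𝒞 → Hom_A(B, M) is injective for every right A-module M. -/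
open MulOpposite

variable {G : Type*} [Group G] [DecidableEq G] {A : Type*} [Ring A]


/-- Right action of `a ∈ A` on the basis element `y` of `𝒞 = AG ≅ G →₀ A`. -/
noncomputable def ractSingle (𝒜 : G → AddSubgroup A) [DirectSum.Decomposition 𝒜]
    (y : G) (a : A) : G →₀ A :=
  DirectSum.toAddMonoid
    (fun z => (Finsupp.singleAddHom (y * z)).comp (𝒜 z).subtype)
    (DirectSum.decompose 𝒜 a)

/-- The left `A`-linear endomorphism `ã : c ↦ c·a` of `𝒞 = AG` (right
multiplication by `a`). -/
noncomputable def rmulHom (𝒜 : G → AddSubgroup A) [DirectSum.Decomposition 𝒜]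
    (a : A) : (G →₀ A) →ₗ[A] (G →₀ A) :=
  Finsupp.lsum ℕ fun y => LinearMap.toSpanSingleton A _ (ractSingle 𝒜 y a)

/-- The projection `e_x` of `𝒞 = AG` onto the direct summand `Ax`. -/
noncomputable def projHom (A : Type*) [Ring A] (x : G) : (G →₀ A) →ₗ[A] (G →₀ A) :=
  Finsupp.lsingle x ∘ₗ Finsupp.lapply x

/-- `ã` as an element of the opposite of the endomorphism ring of `𝒞` (the
left-colinear endomorphism ring has multiplication opposite to composition). -/
noncomputable def atilde (𝒜 : G → AddSubgroup A) [DirectSum.Decomposition 𝒜]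
    (a : A) : (Module.End A (G →₀ A))ᵐᵒᵖ :=
  op (rmulHom 𝒜 a)

/-- `e_x` as an element of the opposite of the endomorphism ring of `𝒞`. -/
noncomputable def eIdem (A : Type*) [Ring A] (x : G) : (Module.End A (G →₀ A))ᵐᵒᵖ :=
  op (projHom A x)

/-- The smash product ring `B`: the subring of the (left-colinear) endomorphism
ring of `𝒞 = AG` generated by `Ã` and the orthogonal idempotents `{e_x}`. -/
noncomputable def smashB (𝒜 : G → AddSubgroup A) [DirectSum.Decomposition 𝒜] :
    Subring (Module.End A (G →₀ A))ᵐᵒᵖ :=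
  Subring.closure (Set.range (atilde 𝒜) ∪ Set.range (eIdem A (G := G)))

/-- The `A`-balanced bilinear form `⟨-,-⟩ : 𝒞 × B → A`, `⟨c, f⟩ = ε(f(c))`. -/
noncomputable def cbPairing (c : G →₀ A) (b : (Module.End A (G →₀ A))ᵐᵒᵖ) : A :=
  ((unop b) c).sum fun _ v => v

/-! Pairing against the idempotent `e_x` reads off the `x`-coordinate, `⟨c, e_x⟩ = c x`. This gives
the expansion `c = Σ_z ⟨c, e_z⟩ z`, and it gives injectivity of `α_M`: the value of `α_M u` at
`e_x ∈ B` is `u x`. The pairing `⟨x, ã⟩ = a` holds because `x · a = Σ_z a_z (x z)`, where the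
`a_z` are the homogeneous components of `a`, and the coefficients of this sum add up to `a`. -/

omit [Group G] [DecidableEq G] in
theorem cbPairing_eIdem (c : G →₀ A) (z : G) : cbPairing c (eIdem A z) = c z := by
  simp [cbPairing, eIdem, projHom]

section Graded

variable (𝒜 : G → AddSubgroup A) [DirectSum.Decomposition 𝒜]

theorem ractSingle_sum (y : G) (a : A) : (ractSingle 𝒜 y a).sum (fun _ v => v) = a := by
  let ε : (G →₀ A) →+ A := Finsupp.liftAddHom fun _ => AddMonoidHom.id A
  have hε : ε.comp (DirectSum.toAddMonoid
      fun z => (Finsupp.singleAddHom (y * z)).comp (𝒜 z).subtype) =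
      DirectSum.coeAddMonoidHom 𝒜 := by
    ext z v
    simp [ε, DirectSum.coeAddMonoidHom_of]
  calc (ractSingle 𝒜 y a).sum (fun _ v => v) = ε (ractSingle 𝒜 y a) := rfl
    _ = DirectSum.coeAddMonoidHom 𝒜 (DirectSum.decompose 𝒜 a) := by
      rw [← hε]; rfl
    _ = a := DirectSum.Decomposition.left_inv a

theorem rmulHom_single (x : G) (r a : A) :
    rmulHom 𝒜 a (Finsupp.single x r) = r • ractSingle 𝒜 x a := by
  simp [rmulHom]

theorem cbPairing_single_atilde (x : G) (r a : A) :
    cbPairing (Finsupp.single x r) (atilde 𝒜 a) = r * a := by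
  rw [cbPairing, atilde, unop_op, rmulHom_single, Finsupp.sum_smul_index fun _ => rfl,
    ← Finsupp.mul_sum, ractSingle_sum]

theorem eIdem_mem_smashB (x : G) : eIdem A x ∈ smashB 𝒜 :=
  Subring.subset_closure (Or.inr ⟨x, rfl⟩)

end Graded

omit [Group G] [DecidableEq G] in
theorem sum_single_cbPairing_eIdem (c : G →₀ A) :
    (c.sum fun z _ => Finsupp.single z (cbPairing c (eIdem A z))) = c := by
  conv_rhs => rw [← Finsupp.sum_single c]
  exact Finsupp.sum_congr fun z _ => by rw [cbPairing_eIdem]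

omit [Group G] [DecidableEq G] in
theorem sum_cbPairing_single_eIdem_smul {M : Type*} [AddCommGroup M] [Module Aᵐᵒᵖ M]
    (u : G →₀ M) (x : G) :
    (u.sum fun y m => op (cbPairing (Finsupp.single y (1 : A)) (eIdem A x)) • m) = u x := by
  rw [Finsupp.sum_eq_single x]
  · simp [cbPairing_eIdem]
  · intro y _ hyx
    simp [cbPairing_eIdem, Finsupp.single_eq_of_ne' hyx]
  · simp

theorem stmt14_general (𝒜 : G → AddSubgroup A) [DirectSum.Decomposition 𝒜]
    {M : Type*} [AddCommGroup M] [Module Aᵐᵒᵖ M] :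
    -- the defining values of the bilinear form
    (∀ x y : G, cbPairing (Finsupp.single x (1:A)) (eIdem A y) =
      if x = y then 1 else 0) ∧
    (∀ (x : G) (a : A), cbPairing (Finsupp.single x (1:A)) (atilde 𝒜 a) = a) ∧
    -- `c = Σ_z ⟨c, e_z⟩ z` for every `c ∈ 𝒞`
    (∀ c : G →₀ A,
      c = c.sum fun z _ => Finsupp.single z (cbPairing c (eIdem A z))) ∧
    -- injectivity of `α_M` on `B = smashB 𝒜`
    (∀ u : G →₀ M,
      (∀ b ∈ smashB 𝒜,
        (u.sum fun x m => op (cbPairing (Finsupp.single x (1:A)) b) • m) = 0) →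
      u = 0) := by
  refine ⟨fun x y => ?_, fun x a => ?_, fun c => (sum_single_cbPairing_eIdem c).symm,
    fun u hu => ?_⟩
  · rw [cbPairing_eIdem, Finsupp.single_apply]
  · rw [cbPairing_single_atilde, one_mul]
  · ext x
    rw [← sum_cbPairing_single_eIdem_smul (A := A) u x]
    exact hu _ (eIdem_mem_smashB 𝒜 x)

/-- Let `G` be a group, `A` a `G`-graded ring, `𝒞 = AG`, and
`B = Ã ⊕ (⊕_x e_x Ã)` the smash product ring.  The `A`-balanced bilinear form
`⟨-,-⟩ : 𝒞 × B → A` determined by `⟨x, e_y⟩ = δ_{x,y}` and `⟨x, ã⟩ = a`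
satisfies `c = Σ_{z∈G} ⟨c, e_z⟩ z` (finite sum) for every `c ∈ 𝒞`, and the
induced map `α_M : M ⊗_A 𝒞 → Hom_A(B, M)`, `α_M(m ⊗ c)(b) = m⟨c, b⟩`, is
injective for every right `A`-module `M` (with `M ⊗_A 𝒞` identified with
`G →₀ M` since `𝒞` is free as a left `A`-module). -/
theorem stmt14 (𝒜 : G → AddSubgroup A) [DirectSum.Decomposition 𝒜]
    (hone : (1 : A) ∈ 𝒜 1)
    (hmul : ∀ {x y : G} {a b : A}, a ∈ 𝒜 x → b ∈ 𝒜 y → a * b ∈ 𝒜 (x * y))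
    {M : Type*} [AddCommGroup M] [Module Aᵐᵒᵖ M] :
    -- the defining values of the bilinear form
    (∀ x y : G, cbPairing (Finsupp.single x (1:A)) (eIdem A y) =
      if x = y then 1 else 0) ∧
    (∀ (x : G) (a : A), cbPairing (Finsupp.single x (1:A)) (atilde 𝒜 a) = a) ∧
    -- `c = Σ_z ⟨c, e_z⟩ z` for every `c ∈ 𝒞`
    (∀ c : G →₀ A,
      c = c.sum fun z _ => Finsupp.single z (cbPairing c (eIdem A z))) ∧
    -- injectivity of `α_M` on `B = smashB 𝒜`
    (∀ u : G →₀ M,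
      (∀ b ∈ smashB 𝒜,
        (u.sum fun x m => op (cbPairing (Finsupp.single x (1:A)) b) • m) = 0) →
      u = 0) :=
  stmt14_general 𝒜
end

section
/- Let G be a group with neutral element e, A a G-graded ring, and S a simple G-graded right A-module (S ≠ 0 with no nonzero proper graded submodules). If x ∈ G with S_x ≠ 0, then S_x is a simple right A_e-module. -/
/-!
A nonzero `t ∈ T ⊆ S_x` generates a graded submodule `t A`, because the degree-`y` part of `t a`
is `t a_{x⁻¹ y}`. By simplicity `t A = S`, so each `s ∈ S_x` is the degree-`x` part of some `t a`,
that is `s = t a_e ∈ T`.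
-/

open MulOpposite DirectSum

section GradedRightModule

variable {G : Type*} [Group G] [DecidableEq G] {A σA : Type*} [Semiring A] [SetLike σA A]
  [AddSubmonoidClass σA A] (𝒜 : G → σA) [Decomposition 𝒜]
  {S σS : Type*} [AddCommMonoid S] [Module Aᵐᵒᵖ S] [SetLike σS S] [AddSubmonoidClass σS S]
  (𝒮 : G → σS) [Decomposition 𝒮]

theorem decompose_op_smul_of_mem
    (hcompat : ∀ (x y : G) (s : S) (a : A), s ∈ 𝒮 x → a ∈ 𝒜 y → op a • s ∈ 𝒮 (x * y))
    {x : G} {s : S} (hs : s ∈ 𝒮 x) (a : A) (y : G) :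
    (decompose 𝒮 (op a • s) y : S) = op (decompose 𝒜 a (x⁻¹ * y) : A) • s := by
  induction a using Decomposition.inductionOn 𝒜 with
  | zero => simp
  | @homogeneous i b =>
    have hbs := hcompat x i s b hs b.2
    by_cases hdeg : i = x⁻¹ * y
    · subst hdeg
      rw [mul_inv_cancel_left] at hbs
      rw [decompose_of_mem_same 𝒮 hbs, decompose_of_mem_same 𝒜 b.2]
    · rw [decompose_of_mem_ne 𝒮 hbs (fun h => hdeg (by rw [← h, inv_mul_cancel_left])),
        decompose_of_mem_ne 𝒜 b.2 hdeg, op_zero, zero_smul]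
  | add a a' ha ha' => simp only [op_add, add_smul, decompose_add, DirectSum.add_apply,
      AddMemClass.coe_add, ha, ha']

variable {𝒜 𝒮}
variable (hcompat : ∀ (x y : G) (s : S) (a : A), s ∈ 𝒮 x → a ∈ 𝒜 y → op a • s ∈ 𝒮 (x * y))
include hcompat

theorem isHomogeneous_span_singleton {x : G} {s : S} (hs : s ∈ 𝒮 x) :
    (Submodule.span Aᵐᵒᵖ {s}).IsHomogeneous 𝒮 := by
  intro y m hm
  obtain ⟨a, rfl⟩ := Submodule.mem_span_singleton.mp hm
  rw [← op_unop a, decompose_op_smul_of_mem 𝒜 𝒮 hcompat hs]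
  exact Submodule.mem_span_singleton.mpr ⟨_, rfl⟩

theorem exists_mem_degree_one_op_smul_eq {x : G} {s t : S} (hs : s ∈ 𝒮 x) (ht : t ∈ 𝒮 x)
    (hspan : Submodule.span Aᵐᵒᵖ {t} = ⊤) : ∃ a ∈ 𝒜 1, op a • t = s := by
  obtain ⟨a, rfl⟩ := Submodule.mem_span_singleton.mp (hspan ▸ Submodule.mem_top : s ∈ _)
  refine ⟨decompose 𝒜 a.unop 1, SetLike.coe_mem _, ?_⟩
  rw [← inv_mul_cancel x, ← decompose_op_smul_of_mem 𝒜 𝒮 hcompat ht, op_unop,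
    decompose_of_mem_same 𝒮 hs]

end GradedRightModule

theorem stmt17_general {G : Type*} [Group G] [DecidableEq G] {A : Type*} [Ring A]
    (𝒜 : G → AddSubgroup A) [DirectSum.Decomposition 𝒜]
    {S : Type*} [AddCommGroup S] [Module Aᵐᵒᵖ S]
    (𝒮 : G → AddSubgroup S) [DirectSum.Decomposition 𝒮]
    (hcompat : ∀ (x y : G) (s : S) (a : A), s ∈ 𝒮 x → a ∈ 𝒜 y →
      op a • s ∈ 𝒮 (x * y))
    (hsimple : ∀ N : Submodule Aᵐᵒᵖ S,
      (∀ s ∈ N, ∀ x : G, (DirectSum.decompose 𝒮 s x : S) ∈ N) → N = ⊥ ∨ N = ⊤)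
    (x : G) :
    ∀ T : AddSubgroup S, T ≤ 𝒮 x →
      (∀ s ∈ T, ∀ a ∈ 𝒜 1, op a • s ∈ T) →
      T = ⊥ ∨ T = 𝒮 x := by
  intro T hTle hTstab
  refine or_iff_not_imp_left.mpr fun hT => ?_
  obtain ⟨⟨t, htT⟩, ht0⟩ := AddSubgroup.ne_bot_iff_exists_ne_zero.mp hT
  have ht : t ∈ 𝒮 x := hTle htT
  have hspan : Submodule.span Aᵐᵒᵖ {t} = ⊤ :=
    (hsimple _ fun s hs y => isHomogeneous_span_singleton hcompat ht y hs).resolve_left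
      (by simpa using ht0)
  refine le_antisymm hTle fun s hs => ?_
  obtain ⟨a, ha, rfl⟩ := exists_mem_degree_one_op_smul_eq hcompat hs ht hspan
  exact hTstab t htT a ha

/-- Let `G` be a group with neutral element `e`, `A` a `G`-graded ring, and `S`
a simple `G`-graded right `A`-module (nonzero, with no nonzero proper graded
submodules).  If `x ∈ G` with `S_x ≠ 0`, then `S_x` is a simple right
`A_e`-module: every `A_e`-stable additive subgroup `T ≤ S_x` is `⊥` or `S_x`.

Right `A`-modules are encoded as left `Aᵐᵒᵖ`-modules; a graded submodule is a
submodule containing all homogeneous components of its elements. -/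
theorem stmt17 {G : Type*} [Group G] [DecidableEq G] {A : Type*} [Ring A]
    (𝒜 : G → AddSubgroup A) [DirectSum.Decomposition 𝒜]
    (hone : (1 : A) ∈ 𝒜 1)
    (hmul : ∀ {x y : G} {a b : A}, a ∈ 𝒜 x → b ∈ 𝒜 y → a * b ∈ 𝒜 (x * y))
    {S : Type*} [AddCommGroup S] [Module Aᵐᵒᵖ S]
    (𝒮 : G → AddSubgroup S) [DirectSum.Decomposition 𝒮]
    (hcompat : ∀ (x y : G) (s : S) (a : A), s ∈ 𝒮 x → a ∈ 𝒜 y →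
      op a • s ∈ 𝒮 (x * y))
    (hnz : ∃ s : S, s ≠ 0)
    (hsimple : ∀ N : Submodule Aᵐᵒᵖ S,
      (∀ s ∈ N, ∀ x : G, (DirectSum.decompose 𝒮 s x : S) ∈ N) → N = ⊥ ∨ N = ⊤)
    (x : G) (hx : 𝒮 x ≠ ⊥) :
    ∀ T : AddSubgroup S, T ≤ 𝒮 x →
      (∀ s ∈ T, ∀ a ∈ 𝒜 1, op a • s ∈ T) →
      T = ⊥ ∨ T = 𝒮 x :=
  stmt17_general 𝒜 𝒮 hcompat hsimple x
end

section
/- Let G be a group with neutral element e and A a G-graded ring. Every simple G-graded right A-module S is, as a right A_e-module, semisimple; indeed S = ⊕_{x∈G} S_x and each nonzero homogeneous component S_x is a simple right A_e-module. -/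
open MulOpposite

/-!
Let `0 ≠ T ≤ S_x` be stable under `A_e`. The `A`-submodule `T·A` is spanned by homogeneous
elements, hence graded, so simplicity of `S` forces `T·A = S`. Its degree-`x` part is
`T·A_e = T`, hence `S_x = T`.
-/

open DirectSum

section
variable {G : Type*} [Group G] [DecidableEq G] {A : Type*} [Ring A]
    (𝒜 : G → AddSubgroup A) [Decomposition 𝒜]
    {S : Type*} [AddCommGroup S] [Module Aᵐᵒᵖ S]
    {𝒮 : G → AddSubgroup S} [Decomposition 𝒮]

theorem coe_decompose_op_smul_of_mem
    (hcompat : ∀ (x y : G) (s : S) (a : A), s ∈ 𝒮 x → a ∈ 𝒜 y → op a • s ∈ 𝒮 (x * y))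
    {x : G} {s : S} (hs : s ∈ 𝒮 x) (a : A) (z : G) :
    (decompose 𝒮 (op a • s) z : S) = op (decompose 𝒜 a (x⁻¹ * z) : A) • s := by
  induction a using Decomposition.inductionOn 𝒜 with
  | zero => simp
  | @homogeneous y a =>
    rw [decompose_coe]
    by_cases hy : y = x⁻¹ * z
    · subst hy
      rw [of_eq_same, decompose_of_mem_same 𝒮 (by simpa using hcompat _ _ _ _ hs a.2)]
    · rw [of_eq_of_ne _ _ _ (Ne.symm hy), decompose_of_mem_ne 𝒮 (hcompat _ _ _ _ hs a.2)
        (by rintro rfl; simp at hy)]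
      simp
  | add a b ha hb => simp [op_add, add_smul, ha, hb]

theorem isHomogeneous_span
    (hcompat : ∀ (x y : G) (s : S) (a : A), s ∈ 𝒮 x → a ∈ 𝒜 y → op a • s ∈ 𝒮 (x * y))
    {s : Set S} (hs : ∀ t ∈ s, ∃ x, t ∈ 𝒮 x) :
    SetLike.IsHomogeneous 𝒮 (Submodule.span Aᵐᵒᵖ s) := by
  intro z m hm
  induction hm using Submodule.closure_induction with
  | zero => simp
  | add m m' _ _ hm hm' => simpa using add_mem hm hm'
  | smul_mem a t ht =>
    obtain ⟨x, hx⟩ := hs t ht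
    rw [← op_unop a, coe_decompose_op_smul_of_mem 𝒜 hcompat hx]
    exact Submodule.smul_mem _ _ (Submodule.subset_span ht)

theorem coe_decompose_mem_of_mem_span
    (hcompat : ∀ (x y : G) (s : S) (a : A), s ∈ 𝒮 x → a ∈ 𝒜 y → op a • s ∈ 𝒮 (x * y))
    {x : G} {T : AddSubgroup S} (hT : T ≤ 𝒮 x) (hstable : ∀ t ∈ T, ∀ a ∈ 𝒜 1, op a • t ∈ T)
    {m : S} (hm : m ∈ Submodule.span Aᵐᵒᵖ (T : Set S)) :
    (decompose 𝒮 m x : S) ∈ T := by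
  induction hm using Submodule.closure_induction with
  | zero => simp
  | add m m' _ _ hm hm' => simpa using add_mem hm hm'
  | smul_mem a t ht =>
    rw [← op_unop a, coe_decompose_op_smul_of_mem 𝒜 hcompat (hT ht)]
    exact hstable t ht _ (by simpa using (decompose 𝒜 a.unop (x⁻¹ * x)).2)

end

theorem stmt18_general {G : Type*} [Group G] [DecidableEq G] {A : Type*} [Ring A]
    (𝒜 : G → AddSubgroup A) [DirectSum.Decomposition 𝒜]
    {S : Type*} [AddCommGroup S] [Module Aᵐᵒᵖ S]
    (𝒮 : G → AddSubgroup S) [DirectSum.Decomposition 𝒮]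
    (hcompat : ∀ (x y : G) (s : S) (a : A), s ∈ 𝒮 x → a ∈ 𝒜 y →
      op a • s ∈ 𝒮 (x * y))
    (hsimple : ∀ N : Submodule Aᵐᵒᵖ S,
      (∀ s ∈ N, ∀ x : G, (DirectSum.decompose 𝒮 s x : S) ∈ N) → N = ⊥ ∨ N = ⊤) :
    DirectSum.IsInternal 𝒮 ∧
    ∀ x : G, 𝒮 x ≠ ⊥ →
      ∀ T : AddSubgroup S, T ≤ 𝒮 x →
        (∀ s ∈ T, ∀ a ∈ 𝒜 1, op a • s ∈ T) →
        T = ⊥ ∨ T = 𝒮 x := by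
  refine ⟨Decomposition.isInternal 𝒮, fun x _ T hT hstable => ?_⟩
  rcases eq_or_ne T ⊥ with hbot | hne
  · exact Or.inl hbot
  have hhom := isHomogeneous_span 𝒜 hcompat (s := (T : Set S)) fun t ht => ⟨x, hT ht⟩
  have htop : Submodule.span Aᵐᵒᵖ (T : Set S) = ⊤ := by
    refine (hsimple _ fun s hs z => hhom z hs).resolve_left fun h => hne ?_
    exact (AddSubgroup.eq_bot_iff_forall T).2 (Submodule.span_eq_bot.1 h)
  refine Or.inr (le_antisymm hT fun s hs => ?_)
  rw [← decompose_of_mem_same 𝒮 hs]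
  exact coe_decompose_mem_of_mem_span 𝒜 hcompat hT hstable (htop ▸ Submodule.mem_top)

/-- Let `G` be a group with neutral element `e` and `A` a `G`-graded ring.
Every simple `G`-graded right `A`-module `S` is, as a right `A_e`-module,
semisimple: indeed `S = ⊕_{x∈G} S_x` (the decomposition is internal and
direct), and each nonzero homogeneous component `S_x` is a simple right
`A_e`-module (every `A_e`-stable additive subgroup `T ≤ S_x` is `⊥` or `S_x`). -/
theorem stmt18 {G : Type*} [Group G] [DecidableEq G] {A : Type*} [Ring A]
    (𝒜 : G → AddSubgroup A) [DirectSum.Decomposition 𝒜]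
    (hone : (1 : A) ∈ 𝒜 1)
    (hmul : ∀ {x y : G} {a b : A}, a ∈ 𝒜 x → b ∈ 𝒜 y → a * b ∈ 𝒜 (x * y))
    {S : Type*} [AddCommGroup S] [Module Aᵐᵒᵖ S]
    (𝒮 : G → AddSubgroup S) [DirectSum.Decomposition 𝒮]
    (hcompat : ∀ (x y : G) (s : S) (a : A), s ∈ 𝒮 x → a ∈ 𝒜 y →
      op a • s ∈ 𝒮 (x * y))
    (hnz : ∃ s : S, s ≠ 0)
    (hsimple : ∀ N : Submodule Aᵐᵒᵖ S,
      (∀ s ∈ N, ∀ x : G, (DirectSum.decompose 𝒮 s x : S) ∈ N) → N = ⊥ ∨ N = ⊤) :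
    DirectSum.IsInternal 𝒮 ∧
    ∀ x : G, 𝒮 x ≠ ⊥ →
      ∀ T : AddSubgroup S, T ≤ 𝒮 x →
        (∀ s ∈ T, ∀ a ∈ 𝒜 1, op a • s ∈ T) →
        T = ⊥ ∨ T = 𝒮 x :=
  stmt18_general 𝒜 𝒮 hcompat hsimple
end

section
/- Let G be a group with neutral element e, A a G-graded ring, x ∈ G, and let S, S' be simple G-graded right A-modules with S_x ≠ 0 and S'_x ≠ 0. Then S ≅ S' as graded modules if and only if S_x ≅ S'_x as right A_e-modules. -/
/-!
A graded isomorphism `f : S ≅ S'` restricts to an `A_e`-isomorphism `S_x ≅ S'_x`: it commutes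
with taking homogeneous components, so, being injective, it can only hit `S'_x` from `S_x`.

Conversely, let `e : S_x ≅ S'_x` and let `W ≤ S × S'` be the `A`-submodule generated by the graph
of `e`. Since `(s a)_y = s a_{x⁻¹y}` for `s ∈ S_x`, the submodule `W` is homogeneous and its
`x`-component is the graph of `e` itself (the `A_e`-action preserves that graph). By graded
simplicity, both projections of `W` are onto (they contain nonzero elements of degree `x`) and
both `W ∩ (S × 0)` and `W ∩ (0 × S')` vanish (otherwise they would contain `(u, 0)` or `(0, e u)`
with `u ≠ 0` in `S_x`, contradicting that the `x`-component of `W` is the graph of `e`). Goursat's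
lemma then makes `W` the graph of a linear isomorphism `S ≅ S'`, which preserves degrees because
`W` is homogeneous.
-/

open MulOpposite DirectSum

section Components

variable {ι M N : Type*} [DecidableEq ι] [AddCommGroup M] [AddCommGroup N]
  {ℳ : ι → AddSubgroup M} {𝒩 : ι → AddSubgroup N} [Decomposition ℳ] [Decomposition 𝒩]

theorem decompose_map_of_forall_mem {F : M →+ N} (hF : ∀ i, ∀ m ∈ ℳ i, F m ∈ 𝒩 i)
    (m : M) (i : ι) : (decompose 𝒩 (F m) i : N) = F (decompose ℳ m i) := by
  induction m using Decomposition.inductionOn ℳ with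
  | zero => simp
  | @homogeneous j m =>
    obtain rfl | hji := eq_or_ne j i
    · rw [decompose_of_mem_same 𝒩 (hF j m m.2), decompose_of_mem_same ℳ m.2]
    · rw [decompose_of_mem_ne 𝒩 (hF j m m.2) hji, decompose_of_mem_ne ℳ m.2 hji, map_zero]
  | add m m' hm hm' => simp [decompose_add, hm, hm']

theorem mem_of_map_mem_of_injective {F : M →+ N} (hF_inj : Function.Injective F)
    (hF : ∀ i, ∀ m ∈ ℳ i, F m ∈ 𝒩 i) {m : M} {i : ι} (h : F m ∈ 𝒩 i) : m ∈ ℳ i := by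
  have : F (decompose ℳ m i) = F m := by
    rw [← decompose_map_of_forall_mem hF, decompose_of_mem_same 𝒩 h]
  exact hF_inj this ▸ SetLike.coe_mem _

end Components

namespace Submodule

variable {ι R M N : Type*} [DecidableEq ι] [Ring R] [AddCommGroup M] [Module R M]
  [AddCommGroup N] [Module R N]

theorem exists_linearEquiv_graph_eq {L : Submodule R (M × N)}
    (hfst : L.map (LinearMap.fst R M N) = ⊤) (hsnd : L.map (LinearMap.snd R M N) = ⊤)
    (hinl : L.comap (LinearMap.inl R M N) = ⊥) (hinr : L.comap (LinearMap.inr R M N) = ⊥) :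
    ∃ f : M ≃ₗ[R] N, L = (f : M →ₗ[R] N).graph := by
  have h₁ : Function.Surjective (Prod.fst ∘ L.subtype) := fun m => by
    obtain ⟨p, hp, rfl⟩ := (eq_top_iff'.mp hfst) m
    exact ⟨⟨p, hp⟩, rfl⟩
  have h₂ : Function.Surjective (Prod.snd ∘ L.subtype) := fun n => by
    obtain ⟨p, hp, rfl⟩ := (eq_top_iff'.mp hsnd) n
    exact ⟨⟨p, hp⟩, rfl⟩
  have hM : L.goursatFst = ⊥ := by
    rw [← hinl, ← toAddSubgroup_inj, goursatFst_toAddSubgroup]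
    ext m
    simp [AddSubgroup.mem_goursatFst]
  have hN : L.goursatSnd = ⊥ := by
    rw [← hinr, ← toAddSubgroup_inj, goursatSnd_toAddSubgroup]
    ext n
    simp [AddSubgroup.mem_goursatSnd]
  obtain ⟨e, he⟩ := goursat_surjective h₁ h₂
  set f := (L.goursatFst.quotEquivOfEqBot hM).symm ≪≫ₗ e ≪≫ₗ L.goursatSnd.quotEquivOfEqBot hN
  have hL : ∀ p ∈ L, p.2 = f p.1 := by
    intro p hp
    have : (L.goursatFst.mkQ p.1, L.goursatSnd.mkQ p.2) ∈ (e : _ →ₗ[R] _).graph := by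
      rw [← he]; exact ⟨⟨p, hp⟩, rfl⟩
    exact congrArg (L.goursatSnd.quotEquivOfEqBot hN) this
  refine ⟨f, le_antisymm (fun p hp => (LinearMap.mem_graph_iff _ _).mpr (hL p hp)) fun p hp => ?_⟩
  obtain ⟨⟨q, hq⟩, hq₁ : q.1 = p.1⟩ := h₁ p.1
  have : q = p := Prod.ext hq₁ (by rw [hL q hq, hq₁, (LinearMap.mem_graph_iff _ _).mp hp]; rfl)
  exact this ▸ hq

variable (ℳ : ι → AddSubgroup M) (𝒩 : ι → AddSubgroup N) [Decomposition ℳ] [Decomposition 𝒩]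

/-- Homogeneity for the grading `i ↦ ℳ i × 𝒩 i` of `M × N`. -/
def IsProdHomogeneous (W : Submodule R (M × N)) : Prop :=
  ∀ (i : ι) ⦃p : M × N⦄, p ∈ W → ((decompose ℳ p.1 i : M), (decompose 𝒩 p.2 i : N)) ∈ W

variable {ℳ 𝒩} {W : Submodule R (M × N)}

theorem IsProdHomogeneous.map_fst (hW : W.IsProdHomogeneous ℳ 𝒩) :
    (W.map (LinearMap.fst R M N)).IsHomogeneous ℳ := by
  rintro i - ⟨p, hp, rfl⟩
  exact ⟨_, hW i hp, rfl⟩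

theorem IsProdHomogeneous.map_snd (hW : W.IsProdHomogeneous ℳ 𝒩) :
    (W.map (LinearMap.snd R M N)).IsHomogeneous 𝒩 := by
  rintro i - ⟨p, hp, rfl⟩
  exact ⟨_, hW i hp, rfl⟩

theorem IsProdHomogeneous.comap_inl (hW : W.IsProdHomogeneous ℳ 𝒩) :
    (W.comap (LinearMap.inl R M N)).IsHomogeneous ℳ := by
  intro i m hm
  simpa using hW i hm

theorem IsProdHomogeneous.comap_inr (hW : W.IsProdHomogeneous ℳ 𝒩) :
    (W.comap (LinearMap.inr R M N)).IsHomogeneous 𝒩 := by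
  intro i n hn
  simpa using hW i hn

theorem IsProdHomogeneous.mapsTo_of_eq_graph {f : M →ₗ[R] N} (hW : W.IsProdHomogeneous ℳ 𝒩)
    (hf : W = f.graph) (i : ι) : Set.MapsTo f (ℳ i) (𝒩 i) := by
  intro m hm
  have hmi := (LinearMap.mem_graph_iff _ _).mp (hf ▸ hW i (hf ▸ (LinearMap.mem_graph_iff _ (m, f m)).mpr rfl))
  simp only [decompose_of_mem_same ℳ hm] at hmi
  exact hmi ▸ SetLike.coe_mem _

end Submodule

section RightModule

variable {G A : Type*} [Group G] [DecidableEq G] [Ring A] (𝒜 : G → AddSubgroup A)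
  [Decomposition 𝒜]

theorem decompose_op_smul_of_mem_s19 {M : Type*} [AddCommGroup M] [Module Aᵐᵒᵖ M]
    {ℳ : G → AddSubgroup M} [Decomposition ℳ]
    (hℳ : ∀ (y z : G) (m : M) (a : A), m ∈ ℳ y → a ∈ 𝒜 z → op a • m ∈ ℳ (y * z))
    {x : G} {m : M} (hm : m ∈ ℳ x) (a : A) (y : G) :
    (decompose ℳ (op a • m) y : M) = op (decompose 𝒜 a (x⁻¹ * y) : A) • m := by
  induction a using Decomposition.inductionOn 𝒜 with
  | zero => simp
  | @homogeneous z a =>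
    have ham := hℳ x z m a hm a.2
    obtain rfl | hy := eq_or_ne (x * z) y
    · rw [decompose_of_mem_same ℳ ham, inv_mul_cancel_left, decompose_of_mem_same 𝒜 a.2]
    · have hz : z ≠ x⁻¹ * y := fun h => hy (by rw [h, mul_inv_cancel_left])
      rw [decompose_of_mem_ne ℳ ham hy, decompose_of_mem_ne 𝒜 a.2 hz, op_zero, zero_smul]
  | add a a' ha ha' => simp [decompose_add, add_smul, ha, ha']

variable {M M' : Type*} [AddCommGroup M] [Module Aᵐᵒᵖ M] [AddCommGroup M'] [Module Aᵐᵒᵖ M']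
  {ℳ : G → AddSubgroup M} {ℳ' : G → AddSubgroup M'} [Decomposition ℳ] [Decomposition ℳ']
  (hℳ : ∀ (y z : G) (m : M) (a : A), m ∈ ℳ y → a ∈ 𝒜 z → op a • m ∈ ℳ (y * z))
  (hℳ' : ∀ (y z : G) (m : M') (a : A), m ∈ ℳ' y → a ∈ 𝒜 z → op a • m ∈ ℳ' (y * z))
  {x : G} {e : M → M'}
  (he_add : ∀ m ∈ ℳ x, ∀ m' ∈ ℳ x, e (m + m') = e m + e m')
  (he_smul : ∀ m ∈ ℳ x, ∀ a ∈ 𝒜 1, e (op a • m) = op a • e m)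

include hℳ hℳ' in
theorem isProdHomogeneous_span_graphOn (he : Set.MapsTo e (ℳ x) (ℳ' x)) :
    (Submodule.span Aᵐᵒᵖ ((ℳ x : Set M).graphOn e)).IsProdHomogeneous ℳ ℳ' := by
  intro y p hp
  induction hp using Submodule.closure_induction with
  | zero =>
    simp only [Prod.fst_zero, Prod.snd_zero, decompose_zero, DirectSum.zero_apply, ZeroMemClass.coe_zero]
    exact zero_mem _
  | add p q _ _ hp hq => simpa [decompose_add] using add_mem hp hq
  | smul_mem c p hp =>
    obtain ⟨m, hm, rfl⟩ := hp
    induction c using MulOpposite.rec' with | _ a => ?_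
    rw [Prod.smul_fst, Prod.smul_snd, decompose_op_smul_of_mem_s19 𝒜 hℳ hm,
      decompose_op_smul_of_mem_s19 𝒜 hℳ' (he hm), ← Prod.smul_mk]
    exact Submodule.smul_mem _ _ (Submodule.subset_span ⟨m, hm, rfl⟩)

include hℳ hℳ' he_add he_smul in
theorem decompose_mem_graphOn_of_mem_span (he : Set.MapsTo e (ℳ x) (ℳ' x)) {p : M × M'}
    (hp : p ∈ Submodule.span Aᵐᵒᵖ ((ℳ x : Set M).graphOn e)) :
    ((decompose ℳ p.1 x : M), (decompose ℳ' p.2 x : M')) ∈ (ℳ x : Set M).graphOn e := by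
  rw [Set.mem_graphOn]
  induction hp using Submodule.closure_induction with
  | zero => simpa using he_add 0 (zero_mem _) 0 (zero_mem _)
  | add p q _ _ hp hq =>
    simp only [Prod.fst_add, Prod.snd_add, decompose_add, DirectSum.add_apply, AddSubgroup.coe_add]
      at hp hq ⊢
    exact ⟨add_mem hp.1 hq.1, by rw [he_add _ hp.1 _ hq.1, hp.2, hq.2]⟩
  | smul_mem c p hp =>
    obtain ⟨m, hm, rfl⟩ := hp
    induction c using MulOpposite.rec' with | _ a => ?_
    rw [Prod.smul_fst, Prod.smul_snd, decompose_op_smul_of_mem_s19 𝒜 hℳ hm,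
      decompose_op_smul_of_mem_s19 𝒜 hℳ' (he hm), inv_mul_cancel]
    have ha := SetLike.coe_mem (decompose 𝒜 a 1)
    exact ⟨mul_one x ▸ hℳ x 1 m _ hm ha, he_smul m hm _ ha⟩

include hℳ hℳ' he_add he_smul in
theorem exists_linearEquiv_mapsTo_of_bijOn
    (hsimple : ∀ N : Submodule Aᵐᵒᵖ M, N.IsHomogeneous ℳ → N = ⊥ ∨ N = ⊤)
    (hsimple' : ∀ N : Submodule Aᵐᵒᵖ M', N.IsHomogeneous ℳ' → N = ⊥ ∨ N = ⊤)
    (hx : ℳ x ≠ ⊥) (hx' : ℳ' x ≠ ⊥) (he : Set.BijOn e (ℳ x) (ℳ' x)) :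
    ∃ f : M ≃ₗ[Aᵐᵒᵖ] M', ∀ y, Set.MapsTo f (ℳ y) (ℳ' y) := by
  set W := Submodule.span Aᵐᵒᵖ ((ℳ x : Set M).graphOn e)
  have hW : W.IsProdHomogeneous ℳ ℳ' := isProdHomogeneous_span_graphOn 𝒜 hℳ hℳ' he.mapsTo
  have hWx {p : M × M'} (hp : p ∈ W) :=
    Set.mem_graphOn.mp (decompose_mem_graphOn_of_mem_span 𝒜 hℳ hℳ' he_add he_smul he.mapsTo hp)
  have hmem {m : M} (hm : m ∈ ℳ x) : (m, e m) ∈ W := Submodule.subset_span ⟨m, hm, rfl⟩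
  have he_zero : e 0 = 0 := by simpa using he_add 0 (zero_mem _) 0 (zero_mem _)
  obtain ⟨⟨u, hu⟩, hu0⟩ := AddSubgroup.ne_bot_iff_exists_ne_zero.mp hx
  obtain ⟨⟨t, ht⟩, ht0⟩ := AddSubgroup.ne_bot_iff_exists_ne_zero.mp hx'
  obtain ⟨v, hv, rfl⟩ := he.surjOn ht
  replace hu0 : u ≠ 0 := by simpa using hu0
  replace ht0 : e v ≠ 0 := by simpa using ht0
  have hfst : W.map (LinearMap.fst _ M M') = ⊤ := (hsimple _ hW.map_fst).resolve_left
    fun h => hu0 ((Submodule.eq_bot_iff _).mp h u ⟨_, hmem hu, rfl⟩)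
  have hsnd : W.map (LinearMap.snd _ M M') = ⊤ := (hsimple' _ hW.map_snd).resolve_left
    fun h => ht0 ((Submodule.eq_bot_iff _).mp h _ ⟨_, hmem hv, rfl⟩)
  have hinl : W.comap (LinearMap.inl _ M M') = ⊥ := (hsimple _ hW.comap_inl).resolve_right
    fun h => by
      have := hWx (show u ∈ W.comap (LinearMap.inl _ M M') from h ▸ Submodule.mem_top)
      simp only [LinearMap.coe_inl, decompose_of_mem_same ℳ hu, SetLike.mem_coe, decompose_zero,
        DirectSum.zero_apply, ZeroMemClass.coe_zero] at this
      exact hu0 (he.injOn hu (zero_mem _) (this.2.trans he_zero.symm))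
  have hinr : W.comap (LinearMap.inr _ M M') = ⊥ := (hsimple' _ hW.comap_inr).resolve_right
    fun h => by
      have := hWx (show e v ∈ W.comap (LinearMap.inr _ M M') from h ▸ Submodule.mem_top)
      simp only [LinearMap.coe_inr, decompose_zero, DirectSum.zero_apply, ZeroMemClass.coe_zero,
        decompose_of_mem_same ℳ' ht] at this
      exact ht0 (this.2 ▸ he_zero)
  obtain ⟨f, hf⟩ := Submodule.exists_linearEquiv_graph_eq hfst hsnd hinl hinr
  exact ⟨f, hW.mapsTo_of_eq_graph hf⟩

end RightModule

theorem stmt19_general {G : Type*} [Group G] [DecidableEq G] {A : Type*} [Ring A]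
    (𝒜 : G → AddSubgroup A) [DirectSum.Decomposition 𝒜]
    {S S' : Type*} [AddCommGroup S] [Module Aᵐᵒᵖ S] [AddCommGroup S'] [Module Aᵐᵒᵖ S']
    (𝒮 : G → AddSubgroup S) [DirectSum.Decomposition 𝒮]
    (𝒮' : G → AddSubgroup S') [DirectSum.Decomposition 𝒮']
    (hcompat : ∀ (y z : G) (s : S) (a : A), s ∈ 𝒮 y → a ∈ 𝒜 z →
      op a • s ∈ 𝒮 (y * z))
    (hcompat' : ∀ (y z : G) (s : S') (a : A), s ∈ 𝒮' y → a ∈ 𝒜 z →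
      op a • s ∈ 𝒮' (y * z))
    (hsimple : ∀ N : Submodule Aᵐᵒᵖ S,
      (∀ s ∈ N, ∀ y : G, (DirectSum.decompose 𝒮 s y : S) ∈ N) → N = ⊥ ∨ N = ⊤)
    (hsimple' : ∀ N : Submodule Aᵐᵒᵖ S',
      (∀ s ∈ N, ∀ y : G, (DirectSum.decompose 𝒮' s y : S') ∈ N) → N = ⊥ ∨ N = ⊤)
    (x : G) (hx : 𝒮 x ≠ ⊥) (hx' : 𝒮' x ≠ ⊥) :
    (∃ f : S → S', Function.Bijective f ∧
        (∀ s t : S, f (s + t) = f s + f t) ∧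
        (∀ (a : A) (s : S), f (op a • s) = op a • f s) ∧
        (∀ y : G, ∀ s ∈ 𝒮 y, f s ∈ 𝒮' y)) ↔
    (∃ e : S → S', Set.MapsTo e (𝒮 x) (𝒮' x) ∧
        Set.InjOn e (𝒮 x) ∧ Set.SurjOn e (𝒮 x) (𝒮' x) ∧
        (∀ s ∈ 𝒮 x, ∀ t ∈ 𝒮 x, e (s + t) = e s + e t) ∧
        (∀ s ∈ 𝒮 x, ∀ a ∈ 𝒜 1, e (op a • s) = op a • e s)) := by
  constructor
  · rintro ⟨f, hf, hf_add, hf_smul, hf_deg⟩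
    refine ⟨f, hf_deg x, hf.1.injOn, fun t ht => ?_, fun s _ t _ => hf_add s t,
      fun s _ a _ => hf_smul a s⟩
    obtain ⟨s, rfl⟩ := hf.2 t
    exact ⟨s, mem_of_map_mem_of_injective (F := AddMonoidHom.mk' f hf_add) hf.1 hf_deg ht, rfl⟩
  · rintro ⟨e, he_maps, he_inj, he_surj, he_add, he_smul⟩
    obtain ⟨f, hf⟩ := exists_linearEquiv_mapsTo_of_bijOn 𝒜 hcompat hcompat' he_add he_smul
      (fun N hN => hsimple N fun s hs y => hN y hs) (fun N hN => hsimple' N fun s hs y => hN y hs)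
      hx hx' ⟨he_maps, he_inj, he_surj⟩
    exact ⟨f, f.bijective, map_add f, fun a => map_smul f (op a), hf⟩

/-- Let `G` be a group with neutral element `e`, `A` a `G`-graded ring, `x ∈ G`,
and `S`, `S'` simple `G`-graded right `A`-modules with `S_x ≠ 0` and `S'_x ≠ 0`.
Then `S ≅ S'` as graded modules if and only if `S_x ≅ S'_x` as right
`A_e`-modules.

A graded isomorphism is a bijective additive, right `A`-linear, degree
preserving map `S → S'`; an `A_e`-isomorphism of the components is a bijection
`S_x → S'_x` which is additive and `A_e`-equivariant (encoded via a function on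
the ambient modules). -/
theorem stmt19 {G : Type*} [Group G] [DecidableEq G] {A : Type*} [Ring A]
    (𝒜 : G → AddSubgroup A) [DirectSum.Decomposition 𝒜]
    (hone : (1 : A) ∈ 𝒜 1)
    (hmul : ∀ {x y : G} {a b : A}, a ∈ 𝒜 x → b ∈ 𝒜 y → a * b ∈ 𝒜 (x * y))
    {S S' : Type*} [AddCommGroup S] [Module Aᵐᵒᵖ S] [AddCommGroup S'] [Module Aᵐᵒᵖ S']
    (𝒮 : G → AddSubgroup S) [DirectSum.Decomposition 𝒮]
    (𝒮' : G → AddSubgroup S') [DirectSum.Decomposition 𝒮']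
    (hcompat : ∀ (y z : G) (s : S) (a : A), s ∈ 𝒮 y → a ∈ 𝒜 z →
      op a • s ∈ 𝒮 (y * z))
    (hcompat' : ∀ (y z : G) (s : S') (a : A), s ∈ 𝒮' y → a ∈ 𝒜 z →
      op a • s ∈ 𝒮' (y * z))
    (hnz : ∃ s : S, s ≠ 0) (hnz' : ∃ s : S', s ≠ 0)
    (hsimple : ∀ N : Submodule Aᵐᵒᵖ S,
      (∀ s ∈ N, ∀ y : G, (DirectSum.decompose 𝒮 s y : S) ∈ N) → N = ⊥ ∨ N = ⊤)
    (hsimple' : ∀ N : Submodule Aᵐᵒᵖ S',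
      (∀ s ∈ N, ∀ y : G, (DirectSum.decompose 𝒮' s y : S') ∈ N) → N = ⊥ ∨ N = ⊤)
    (x : G) (hx : 𝒮 x ≠ ⊥) (hx' : 𝒮' x ≠ ⊥) :
    (∃ f : S → S', Function.Bijective f ∧
        (∀ s t : S, f (s + t) = f s + f t) ∧
        (∀ (a : A) (s : S), f (op a • s) = op a • f s) ∧
        (∀ y : G, ∀ s ∈ 𝒮 y, f s ∈ 𝒮' y)) ↔
    (∃ e : S → S', Set.MapsTo e (𝒮 x) (𝒮' x) ∧
        Set.InjOn e (𝒮 x) ∧ Set.SurjOn e (𝒮 x) (𝒮' x) ∧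
        (∀ s ∈ 𝒮 x, ∀ t ∈ 𝒮 x, e (s + t) = e s + e t) ∧
        (∀ s ∈ 𝒮 x, ∀ a ∈ 𝒜 1, e (op a • s) = op a • e s)) :=
  stmt19_general 𝒜 𝒮 𝒮' hcompat hcompat' hsimple hsimple' x hx hx'
end
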